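/- arXiv:1909.00724 — 5 statements merged into one kernel-verified Lean document; each statement's English description precedes it below -/
import Mathlib

section
/- Let ω be an integrable homogeneous 1-form defining a codimension-one degree-e foliation of ℙⁿ (hypotheses (H1)–(H4)). Then 1 ∉ I(ω): there exists no η : Fin (n+1) → S such that for all i, j one has D i j = (f i)·(η j) − (f j)·(η i). (Equivalently, dω is never globally of the form ω∧η, so ω always has persistent singularities; this is the ℙⁿ instance of the statement that a foliation with c₁(𝓛) ≠ 0 and H¹(X,𝓛)=0 has persistent singularities.) -/
open MvPolynomial

lemma euler_monomial {N : ℕ} (v : Fin N →₀ ℕ) (a : ℂ) :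
    ∑ i, X i * pderiv i (monomial v a) = (v.degree : ℂ) • monomial v a := by
  have key : ∀ i : Fin N, X i * pderiv i (monomial v a) = ((v i : ℂ)) • monomial v a := by
    intro i
    rw [pderiv_monomial]
    rcases Nat.eq_zero_or_pos (v i) with h | h
    · simp [h]
    · rw [X, monomial_mul, one_mul]
      have hv : Finsupp.single i 1 + (v - Finsupp.single i 1) = v := by
        ext j
        rcases eq_or_ne j i with rfl | hj
        · simp [Finsupp.single_apply]; omega
        · simp [Finsupp.single_apply, Ne.symm hj]
      rw [hv, smul_monomial]
      congr 1
      rw [smul_eq_mul, mul_comm]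
  rw [Finset.sum_congr rfl fun i _ => key i, ← Finset.sum_smul]
  congr 1
  have : (v.degree : ℂ) = ((∑ i, v i : ℕ) : ℂ) := by
    congr 1
    rw [Finsupp.degree]
    exact Finset.sum_subset (Finset.subset_univ _)
      (fun x _ hx => Finsupp.notMem_support_iff.mp hx)
  rw [this]
  push_cast
  rfl

lemma euler {N d : ℕ} {p : MvPolynomial (Fin N) ℂ} (hp : p.IsHomogeneous d) :
    ∑ i, X i * pderiv i p = (d : ℂ) • p := by
  conv_lhs => rw [p.as_sum]
  simp_rw [map_sum, Finset.mul_sum]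
  rw [Finset.sum_comm]
  have : ∀ v ∈ p.support, ∑ i, X i * pderiv i (monomial v (coeff v p))
      = (d : ℂ) • monomial v (coeff v p) := by
    intro v hv
    rw [euler_monomial]
    congr 2
    have := hp (MvPolynomial.mem_support_iff.mp hv)
    rw [Finsupp.degree_eq_weight_one]
    exact this
  rw [Finset.sum_congr rfl this, ← Finset.smul_sum, ← p.as_sum]

/-- **`1 ∉ I(ω)`:** the differential `dω` of an integrable homogeneous 1-form
defining a codimension-one degree-`e` foliation of `ℙⁿ` is never globally of the
form `ω ∧ η`; every such foliation has persistent singularities. -/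
theorem one_not_mem_persistent (n e : ℕ) (hn : 2 ≤ n) (he : 2 ≤ e)
    (f : Fin (n+1) → MvPolynomial (Fin (n+1)) ℂ)
    (D : Fin (n+1) → Fin (n+1) → MvPolynomial (Fin (n+1)) ℂ)
    (hD : ∀ i j, D i j = pderiv i (f j) - pderiv j (f i))
    (H1 : ∀ i, (f i).IsHomogeneous (e - 1)) (H1' : ∃ i, f i ≠ 0)
    (H2 : ∑ i, X i * f i = 0)
    (H3 : ∀ i j k, f i * D j k - f j * D i k + f k * D i j = 0)
    (H4 : ∀ g : MvPolynomial (Fin (n+1)) ℂ, (∀ i, g ∣ f i) → IsUnit g) :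
    ¬ ∃ η : Fin (n+1) → MvPolynomial (Fin (n+1)) ℂ,
      ∀ i j, D i j = f i * η j - f j * η i := by
  rintro ⟨η, hη⟩
  -- contraction with the Euler vector field
  have hcontract : ∀ j, ∑ i, X i * D i j = (e : ℂ) • f j := by
    intro j
    have h1 : ∑ i, X i * pderiv i (f j) = ((e - 1 : ℕ) : ℂ) • f j := euler (H1 j)
    have h2 : f j + ∑ i, X i * pderiv j (f i) = 0 := by
      have := congrArg (pderiv j) H2
      rw [map_sum, map_zero] at this
      calc f j + ∑ i, X i * pderiv j (f i)
          = ∑ i, pderiv j (X i * f i) := by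
            simp_rw [pderiv_mul, pderiv_X]
            rw [Finset.sum_add_distrib]
            congr 1
            rw [Finset.sum_eq_single j] <;>
              simp +contextual [Pi.single_apply, eq_comm]
        _ = 0 := this
    have h3 : ∑ i, X i * pderiv j (f i) = -f j := by linear_combination h2
    simp_rw [hD, mul_sub, Finset.sum_sub_distrib, h1, h3]
    have : ((e - 1 : ℕ) : ℂ) = (e : ℂ) - 1 := by
      rw [Nat.cast_sub (by omega), Nat.cast_one]
    rw [this, sub_smul, one_smul, sub_neg_eq_add, sub_add_cancel]
  set g : MvPolynomial (Fin (n+1)) ℂ := ∑ i, X i * η i with hg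
  have hkey : ∀ j, (e : ℂ) • f j = - (f j * g) := by
    intro j
    rw [← hcontract j]
    simp_rw [hη, mul_sub, Finset.sum_sub_distrib]
    simp_rw [show ∀ i, X i * (f i * η j) = (X i * f i) * η j from fun i => by ring,
      show ∀ i, X i * (f j * η i) = f j * (X i * η i) from fun i => by ring]
    rw [← Finset.sum_mul, H2, zero_mul, ← Finset.mul_sum, ← hg, zero_sub]
  obtain ⟨j, hj⟩ := H1'
  have hzero : f j * (g + C (e : ℂ)) = 0 := by
    have := hkey j
    rw [smul_eq_C_mul] at this
    linear_combination this
  have hge : g = - C (e : ℂ) := by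
    rcases mul_eq_zero.mp hzero with h | h
    · exact absurd h hj
    · linear_combination h
  have h0 : constantCoeff g = 0 := by
    rw [hg, map_sum]
    apply Finset.sum_eq_zero
    intro i _
    rw [map_mul, constantCoeff_X, zero_mul]
  rw [hge] at h0
  simp only [map_neg, constantCoeff_C] at h0
  have : (e : ℂ) = 0 := by linear_combination -h0
  have : e = 0 := by exact_mod_cast this
  omega
end

section
/- Let ω be an integrable homogeneous 1-form defining a codimension-one degree-e foliation of ℙⁿ (hypotheses (H1)–(H4)). If the singular ideal J(ω) is a radical ideal, then the Kupka ideal equals the vanishing ideal of the set-theoretic Kupka set of the affine cone: K(ω) = MvPolynomial.vanishingIdeal { x : Fin (n+1) → ℂ | (∀ i, eval x (f i) = 0) ∧ (∃ i j, eval x (D i j) ≠ 0) }. (Since the vanishing ideal of a set equals that of its Zariski closure, this says the Kupka scheme Kup(ω) coincides with the Kupka set 𝒦_set.) -/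
open MvPolynomial

namespace MvPolynomial

variable {σ k K : Type*} [Field k] [Field K] [Algebra k K]

theorem vanishingIdeal_colon (V : Set (σ → K)) (S : Set (MvPolynomial σ k)) :
    (vanishingIdeal k V).colon S = vanishingIdeal k (V \ zeroLocus K (Ideal.span S)) := by
  ext g
  simp only [Submodule.mem_colon, smul_eq_mul, mem_vanishingIdeal_iff, map_mul, mul_eq_zero,
    zeroLocus_span, Set.mem_sdiff, Set.mem_ofPred_eq, and_imp, not_forall]
  constructor
  · rintro hg x hx ⟨p, hp, hpx⟩
    exact (hg p hp x hx).resolve_right hpx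
  · intro hg p hp x hx
    by_cases hpx : aeval x p = 0
    · exact Or.inr hpx
    · exact Or.inl (hg x hx ⟨p, hp, hpx⟩)

end MvPolynomial

theorem kupka_eq_vanishingIdeal_kupkaSet_general (n : ℕ)
    (f : Fin (n+1) → MvPolynomial (Fin (n+1)) ℂ)
    (D : Fin (n+1) → Fin (n+1) → MvPolynomial (Fin (n+1)) ℂ)
    (J : Ideal (MvPolynomial (Fin (n+1)) ℂ)) (hJ : J = Ideal.span (Set.range f))
    (K : Ideal (MvPolynomial (Fin (n+1)) ℂ))
    (hK : K = J.colon (Ideal.span {p | ∃ i j, D i j = p}))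
    (hJrad : J.IsRadical) :
    K = MvPolynomial.vanishingIdeal ℂ
      {x : Fin (n+1) → ℂ | (∀ i, eval x (f i) = 0) ∧ ∃ i j, eval x (D i j) ≠ 0} := by
  have hNullstellensatz : J = vanishingIdeal ℂ (zeroLocus ℂ J) := by
    rw [vanishingIdeal_zeroLocus_eq_radical, hJrad.radical]
  rw [hK, hNullstellensatz, Ideal.colon_span, vanishingIdeal_colon]
  congr 1
  ext x
  simp [hJ, zeroLocus_span]

/-- **If `J(ω)` is radical then the Kupka scheme coincides with the Kupka set:**
the Kupka ideal `K(ω)` equals the vanishing ideal of the set-theoretic Kupka set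
of the affine cone, `{x | ω(x) = 0 and dω(x) ≠ 0}`. -/
theorem kupka_eq_vanishingIdeal_kupkaSet (n e : ℕ) (hn : 2 ≤ n) (he : 2 ≤ e)
    (f : Fin (n+1) → MvPolynomial (Fin (n+1)) ℂ)
    (D : Fin (n+1) → Fin (n+1) → MvPolynomial (Fin (n+1)) ℂ)
    (hD : ∀ i j, D i j = pderiv i (f j) - pderiv j (f i))
    (H1 : ∀ i, (f i).IsHomogeneous (e - 1)) (H1' : ∃ i, f i ≠ 0)
    (H2 : ∑ i, X i * f i = 0)
    (H3 : ∀ i j k, f i * D j k - f j * D i k + f k * D i j = 0)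
    (H4 : ∀ g : MvPolynomial (Fin (n+1)) ℂ, (∀ i, g ∣ f i) → IsUnit g)
    (J : Ideal (MvPolynomial (Fin (n+1)) ℂ)) (hJ : J = Ideal.span (Set.range f))
    (K : Ideal (MvPolynomial (Fin (n+1)) ℂ))
    (hK : K = J.colon (Ideal.span {p | ∃ i j, D i j = p}))
    (hJrad : J.IsRadical) :
    K = MvPolynomial.vanishingIdeal ℂ
      {x : Fin (n+1) → ℂ | (∀ i, eval x (f i) = 0) ∧ ∃ i j, eval x (D i j) ≠ 0} :=
  kupka_eq_vanishingIdeal_kupkaSet_general n f D J hJ K hK hJrad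
end

section
/- Let ω be an integrable homogeneous 1-form defining a codimension-one degree-e foliation of ℙⁿ (hypotheses (H1)–(H4)). If the singular ideal J(ω) is a radical ideal of S, then ω has a Kupka singularity: there exists a point x : Fin (n+1) → ℂ with x ≠ 0 such that eval x (f i) = 0 for all i, and eval x (D i j) ≠ 0 for some pair of indices i, j (i.e. ω(x) = 0 but dω(x) ≠ 0). -/
/-!
Suppose no Kupka point exists, so every `D i j` vanishes at each nonzero common zero of the `f i`.
Some `D p q` is nonzero: otherwise `ω` is closed, and since `ω` vanishes on the Euler field `E`
(H2), Cartan's formula gives `e • ω = L_E ω = ι_E dω = 0`.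

If `e ≥ 3`, `D p q` is homogeneous of positive degree, so it also vanishes at the origin; by the
Nullstellensatz it lies in the radical of `J(ω)`, which is `J(ω)`. But `D p q` has degree `e - 2`,
below the degree `e - 1` of the generators, so it is zero.

If `e = 2`, `D p q` is a nonzero constant and `f p`, `f q` are linear forms in `n + 1 ≥ 3`
variables, so they have a common nonzero zero `x`. Evaluating the integrability relation
`f i D p q = f p D i q - f q D i p` at `x` shows that all `f i` vanish there, so `x` is a Kupka
point.
-/

open MvPolynomial

namespace MvPolynomial

section Homogeneous

variable {σ R : Type*} [CommSemiring R] {m d : ℕ}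

lemma coeff_eq_zero_of_mem_span_of_degree_lt {ι : Type*} {f : ι → MvPolynomial σ R}
    (hf : ∀ i, (f i).IsHomogeneous m) {g : MvPolynomial σ R} (hg : g ∈ Ideal.span (Set.range f))
    {s : σ →₀ ℕ} (hs : s.degree < m) : coeff s g = 0 := by
  induction hg using Submodule.span_induction generalizing s with
  | mem _ h =>
    obtain ⟨i, rfl⟩ := h
    exact (hf i).coeff_eq_zero hs.ne
  | zero => exact coeff_zero s
  | add _ _ _ _ ha hb => rw [coeff_add, ha hs, hb hs, add_zero]
  | smul c _ _ ih =>
    classical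
    rw [smul_eq_mul, coeff_mul]
    refine Finset.sum_eq_zero fun ab hab => ?_
    have hle : ab.2 ≤ s := (Finset.HasAntidiagonal.mem_antidiagonal.mp hab) ▸ le_add_self
    rw [ih ((Finsupp.degree_mono hle).trans_lt hs), mul_zero]

lemma IsHomogeneous.eq_zero_of_mem_span_of_lt {ι : Type*} {f : ι → MvPolynomial σ R}
    (hf : ∀ i, (f i).IsHomogeneous m) {g : MvPolynomial σ R} (hg : g.IsHomogeneous d)
    (hdm : d < m) (hmem : g ∈ Ideal.span (Set.range f)) : g = 0 := by
  ext s
  rw [coeff_zero]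
  by_cases hs : s.degree = d
  · exact coeff_eq_zero_of_mem_span_of_degree_lt hf hmem (hs ▸ hdm)
  · exact hg.coeff_eq_zero hs

lemma IsHomogeneous.eq_C_coeff_zero {p : MvPolynomial σ R} (hp : p.IsHomogeneous 0) :
    p = C (coeff 0 p) :=
  totalDegree_eq_zero_iff_eq_C.mp ((totalDegree_zero_iff_isHomogeneous σ).mpr hp)

lemma IsHomogeneous.eval_eq_sum_mul [Fintype σ] {p : MvPolynomial σ R} (hp : p.IsHomogeneous 1)
    (x : σ → R) : eval x p = ∑ i, x i * coeff 0 (pderiv i p) := by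
  conv_lhs => rw [← one_smul ℕ p, ← hp.sum_X_mul_pderiv]
  simp only [map_sum, map_mul, eval_X]
  refine Finset.sum_congr rfl fun i _ => ?_
  rw [(hp.pderiv (i := i)).eq_C_coeff_zero, eval_C, coeff_zero_C]

end Homogeneous

lemma exists_ne_zero_forall_eval_eq_zero {σ ι K : Type*} [Fintype σ] [Fintype ι] [Field K]
    {g : ι → MvPolynomial σ K} (hg : ∀ l, (g l).IsHomogeneous 1)
    (hcard : Fintype.card ι < Fintype.card σ) : ∃ x ≠ 0, ∀ l, eval x (g l) = 0 := by
  let M : Matrix ι σ K := Matrix.of fun l i => coeff 0 (pderiv i (g l))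
  have hker : LinearMap.ker M.mulVecLin ≠ ⊥ :=
    LinearMap.ker_ne_bot_of_finrank_lt (by simpa using hcard)
  obtain ⟨x, hx, hx0⟩ := Submodule.exists_mem_ne_zero_of_ne_bot hker
  refine ⟨x, hx0, fun l => ?_⟩
  have hl := congrFun (LinearMap.mem_ker.mp hx) l
  rw [(hg l).eval_eq_sum_mul]
  simpa [M, Matrix.mulVec, dotProduct, mul_comm] using hl

lemma eq_zero_of_sum_X_mul_eq_zero_of_pderiv_comm {σ R : Type*} [Fintype σ] [CommRing R]
    [IsDomain R] [CharZero R] {d : ℕ} {f : σ → MvPolynomial σ R}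
    (hf : ∀ i, (f i).IsHomogeneous d) (hE : ∑ i, X i * f i = 0)
    (hclosed : ∀ i j, pderiv i (f j) = pderiv j (f i)) (j : σ) : f j = 0 := by
  classical
  have key : (d + 1 : MvPolynomial σ R) * f j = 0 := by
    have h := congrArg (pderiv j) hE
    simp only [map_sum, pderiv_mul, pderiv_X, Pi.single_apply, Finset.sum_add_distrib, ite_mul,
      one_mul, zero_mul, Finset.sum_ite_eq', Finset.mem_univ, if_true, map_zero, hclosed j,
      (hf j).sum_X_mul_pderiv, nsmul_eq_mul] at h
    linear_combination h
  exact (mul_eq_zero.mp key).resolve_left (by exact_mod_cast d.succ_ne_zero)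

lemma eval_eq_zero_of_integrable {σ ι K : Type*} [Field K] {f : ι → MvPolynomial σ K}
    {D : ι → ι → MvPolynomial σ K} (hint : ∀ i j k, f i * D j k - f j * D i k + f k * D i j = 0)
    {x : σ → K} {p q : ι} (hp : eval x (f p) = 0) (hq : eval x (f q) = 0)
    (hpq : eval x (D p q) ≠ 0) (i : ι) : eval x (f i) = 0 := by
  have h := congrArg (eval x) (hint i p q)
  simp only [map_add, map_sub, map_mul, hp, hq, zero_mul, sub_zero, add_zero, map_zero] at h
  exact (mul_eq_zero.mp h).resolve_right hpq

lemma IsHomogeneous.mem_radical_span_of_eval_eq_zero {σ ι K : Type*} [Finite σ] [Field K]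
    [IsAlgClosed K] {f : ι → MvPolynomial σ K} {g : MvPolynomial σ K} {d : ℕ}
    (hg : g.IsHomogeneous d) (hd : d ≠ 0)
    (h : ∀ x ≠ 0, (∀ i, eval x (f i) = 0) → eval x g = 0) :
    g ∈ (Ideal.span (Set.range f)).radical := by
  rw [← vanishingIdeal_zeroLocus_eq_radical (K := K), mem_vanishingIdeal_iff]
  intro x hx
  rw [aeval_eq_eval]
  by_cases hx0 : x = 0
  · rw [hx0, eval_zero, constantCoeff_eq]
    exact hg.coeff_eq_zero (by simpa using hd.symm)
  · refine h x hx0 fun i => ?_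
    simpa using (mem_zeroLocus_iff.mp hx) _ (Ideal.subset_span ⟨i, rfl⟩)

end MvPolynomial

theorem exists_kupka_point_general (n e : ℕ) (hn : 2 ≤ n) (he : 2 ≤ e)
    (f : Fin (n+1) → MvPolynomial (Fin (n+1)) ℂ)
    (D : Fin (n+1) → Fin (n+1) → MvPolynomial (Fin (n+1)) ℂ)
    (hD : ∀ i j, D i j = pderiv i (f j) - pderiv j (f i))
    (H1 : ∀ i, (f i).IsHomogeneous (e - 1)) (H1' : ∃ i, f i ≠ 0)
    (H2 : ∑ i, X i * f i = 0)
    (H3 : ∀ i j k, f i * D j k - f j * D i k + f k * D i j = 0)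
    (hJrad : (Ideal.span (Set.range f)).IsRadical) :
    ∃ x : Fin (n+1) → ℂ, x ≠ 0 ∧ (∀ i, eval x (f i) = 0) ∧
      ∃ i j, eval x (D i j) ≠ 0 := by
  by_contra! hno_kupka
  have hDhom : ∀ i j, (D i j).IsHomogeneous (e - 2) := fun i j => by
    rw [hD, show e - 2 = e - 1 - 1 by omega]
    exact (H1 j).pderiv.sub (H1 i).pderiv
  obtain ⟨p, q, hpq⟩ : ∃ p q, D p q ≠ 0 := by
    by_contra! hclosed
    obtain ⟨i, hi⟩ := H1'
    exact hi (eq_zero_of_sum_X_mul_eq_zero_of_pderiv_comm H1 H2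
      (fun i j => sub_eq_zero.mp ((hD i j).symm.trans (hclosed i j))) i)
  rcases he.eq_or_lt with rfl | he
  · obtain ⟨x, hx0, hx⟩ := exists_ne_zero_forall_eval_eq_zero (g := ![f p, f q])
      (by simpa [Fin.forall_fin_two] using ⟨H1 p, H1 q⟩) (by simpa using hn)
    have hDx : eval x (D p q) ≠ 0 := by
      rw [(hDhom p q).eq_C_coeff_zero] at hpq ⊢
      simpa using hpq
    exact hDx (hno_kupka x hx0 (eval_eq_zero_of_integrable H3 (hx 0) (hx 1) hDx) p q)
  · refine hpq ((hDhom p q).eq_zero_of_mem_span_of_lt H1 (by omega) ?_)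
    rw [← hJrad.radical]
    exact (hDhom p q).mem_radical_span_of_eval_eq_zero (by omega)
      fun x hx0 hx => hno_kupka x hx0 hx p q

/-- **Existence of Kupka singularities:** if the singular ideal `J(ω)` of an
integrable homogeneous 1-form defining a codimension-one degree-`e` foliation of
`ℙⁿ` is radical, then there is a nonzero point `x` of the affine cone at which
`ω(x) = 0` but `dω(x) ≠ 0`. -/
theorem exists_kupka_point (n e : ℕ) (hn : 2 ≤ n) (he : 2 ≤ e)
    (f : Fin (n+1) → MvPolynomial (Fin (n+1)) ℂ)
    (D : Fin (n+1) → Fin (n+1) → MvPolynomial (Fin (n+1)) ℂ)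
    (hD : ∀ i j, D i j = pderiv i (f j) - pderiv j (f i))
    (H1 : ∀ i, (f i).IsHomogeneous (e - 1)) (H1' : ∃ i, f i ≠ 0)
    (H2 : ∑ i, X i * f i = 0)
    (H3 : ∀ i j k, f i * D j k - f j * D i k + f k * D i j = 0)
    (H4 : ∀ g : MvPolynomial (Fin (n+1)) ℂ, (∀ i, g ∣ f i) → IsUnit g)
    (hJrad : (Ideal.span (Set.range f)).IsRadical) :
    ∃ x : Fin (n+1) → ℂ, x ≠ 0 ∧ (∀ i, eval x (f i) = 0) ∧
      ∃ i j, eval x (D i j) ≠ 0 :=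
  exists_kupka_point_general n e hn he f D hD H1 H1' H2 H3 hJrad
end

section
/- Let R be a Noetherian local ring with maximal ideal 𝔪, let R̂ denote the 𝔪-adic completion of R (AdicCompletion 𝔪 R, an R-algebra), let M be an R-module and m ∈ M. Then the annihilator of the element m ⊗ 1 of the R̂-module M ⊗[R] R̂ equals the extension of the annihilator of m: { a ∈ R̂ | a • (m ⊗ 1) = 0 } = Ideal.map (algebraMap R R̂) { r ∈ R | r • m = 0 }. -/
/-!
By flatness of `R̂`, tensoring the exact sequence `0 → ann m → R → M` (with `1 ↦ m`) stays exact,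
so `a ⊗ m = 0` forces `a ⊗ 1 ∈ R̂ ⊗[R] R` to come from `R̂ ⊗[R] ann m`, whose image in `R̂` is
`(ann m) R̂`.
-/

open TensorProduct

section

variable {R S M : Type*} [CommRing R] [CommRing S] [Algebra R S] [AddCommGroup M] [Module R M]

theorem Ideal.rid_lTensor_subtype_mem_map (I : Ideal R) (t : S ⊗[R] I) :
    TensorProduct.rid R S (I.subtype.lTensor S t) ∈ I.map (algebraMap R S) := by
  induction t using TensorProduct.induction_on with
  | zero => simp
  | tmul s x =>
    simpa [Algebra.smul_def] using Ideal.mul_mem_right s _ (Ideal.mem_map_of_mem (algebraMap R S) x.2)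
  | add s t hs ht => simpa only [map_add] using add_mem hs ht

theorem Module.Flat.mem_map_annihilator_of_smul_one_tmul_eq_zero [Module.Flat R S] {m : M}
    {a : S} (h : a • ((1 : S) ⊗ₜ[R] m) = 0) :
    a ∈ (R ∙ m).annihilator.map (algebraMap R S) := by
  have hexact : Function.Exact ((R ∙ m).annihilator.subtype.lTensor S)
      ((LinearMap.toSpanSingleton R M m).lTensor S) := by
    refine Module.Flat.lTensor_exact S ?_
    rw [Submodule.annihilator_span_singleton]
    exact LinearMap.exact_subtype_ker_map _
  obtain ⟨t, ht⟩ := (hexact (a ⊗ₜ 1)).mp (by simpa [smul_tmul'] using h)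
  simpa [ht] using Ideal.rid_lTensor_subtype_mem_map _ t

theorem Module.Flat.annihilator_span_one_tmul [Module.Flat R S] (m : M) :
    (S ∙ ((1 : S) ⊗ₜ[R] m)).annihilator = (R ∙ m).annihilator.map (algebraMap R S) := by
  refine le_antisymm (fun a ha => ?_) (Ideal.map_le_iff_le_comap.mpr fun r hr => ?_)
  · exact mem_map_annihilator_of_smul_one_tmul_eq_zero
      ((Submodule.mem_annihilator_span_singleton _ _).mp ha)
  · rw [Ideal.mem_comap, Submodule.mem_annihilator_span_singleton, algebraMap_smul, ← tmul_smul,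
      (Submodule.mem_annihilator_span_singleton _ _).mp hr, tmul_zero]

end

theorem annihilator_tmul_one_eq_map_general (R : Type*) [CommRing R] [IsNoetherianRing R]
    (𝔪 : Ideal R)
    (M : Type*) [AddCommGroup M] [Module R M] (m : M)
    (ann : Ideal R) (hann : ∀ r : R, r ∈ ann ↔ r • m = 0)
    (Ann : Ideal (AdicCompletion 𝔪 R))
    (hAnn : ∀ a : AdicCompletion 𝔪 R,
      a ∈ Ann ↔ a • ((1 : AdicCompletion 𝔪 R) ⊗ₜ[R] m) = 0) :
    Ann = Ideal.map (algebraMap R (AdicCompletion 𝔪 R)) ann := by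
  have hAnn_eq : Ann = (AdicCompletion 𝔪 R ∙ ((1 : AdicCompletion 𝔪 R) ⊗ₜ[R] m)).annihilator := by
    ext a
    rw [hAnn, Submodule.mem_annihilator_span_singleton]
  have hann_eq : ann = (R ∙ m).annihilator := by
    ext r
    rw [hann, Submodule.mem_annihilator_span_singleton]
  rw [hAnn_eq, hann_eq, Module.Flat.annihilator_span_one_tmul]

/-- **Annihilators and completion:** for a Noetherian local ring `(R, 𝔪)` with
`𝔪`-adic completion `R̂ = AdicCompletion 𝔪 R`, an `R`-module `M` and `m ∈ M`, the
annihilator in `R̂` of the element `m ⊗ 1` of `M ⊗[R] R̂` (written here as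
`1 ⊗ₜ m ∈ R̂ ⊗[R] M`, using the canonical `R̂`-module structure) is the extension
`(ann m)·R̂` of the annihilator of `m`. -/
theorem annihilator_tmul_one_eq_map (R : Type*) [CommRing R] [IsNoetherianRing R]
    [IsLocalRing R] (𝔪 : Ideal R) (h𝔪 : 𝔪 = IsLocalRing.maximalIdeal R)
    (M : Type*) [AddCommGroup M] [Module R M] (m : M)
    (ann : Ideal R) (hann : ∀ r : R, r ∈ ann ↔ r • m = 0)
    (Ann : Ideal (AdicCompletion 𝔪 R))
    (hAnn : ∀ a : AdicCompletion 𝔪 R,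
      a ∈ Ann ↔ a • ((1 : AdicCompletion 𝔪 R) ⊗ₜ[R] m) = 0) :
    Ann = Ideal.map (algebraMap R (AdicCompletion 𝔪 R)) ann :=
  annihilator_tmul_one_eq_map_general R 𝔪 M m ann hann Ann hAnn
end

section
/- Let R be a commutative ring, Ω an R-module, and E ≤ Ω a submodule that is a direct summand (there exists an R-linear map π : Ω → E with π(x) = x for all x ∈ E). Let w : Ω ⊗[R] E → ⋀[R]^2 Ω be the R-linear map determined by w(a ⊗ x) = a ∧ x (where x ∈ E is viewed in Ω via the inclusion). Then the kernel of w is exactly the submodule of Ω ⊗[R] E spanned by the elements x ⊗ x with x ∈ E (the symmetric square Sym²(E) sitting inside Ω ⊗ E); in particular ker w is contained in E ⊗ E. -/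
open TensorProduct ExteriorAlgebra

/-- A bilinear map vanishing on the diagonal gives an alternating map on `Fin 2`. -/
def bilinToAlt {R : Type*} [CommRing R] {Ω : Type*} [AddCommGroup Ω] [Module R Ω]
    {N : Type*} [AddCommGroup N] [Module R N]
    (F : Ω →ₗ[R] Ω →ₗ[R] N) (hF : ∀ a, F a a = 0) : Ω [⋀^Fin 2]→ₗ[R] N where
  toFun v := F (v 0) (v 1)
  map_update_add' v i x y := by
    fin_cases i <;>
      simp [Function.update, Fin.ext_iff]
  map_update_smul' v i c x := by
    fin_cases i <;>
      simp [Function.update, Fin.ext_iff]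
  map_eq_zero_of_eq' v i j h hij := by
    have h01 : v 0 = v 1 := by
      fin_cases i <;> fin_cases j <;> simp_all
    show F (v 0) (v 1) = 0
    rw [h01]
    exact hF _

/-- **Kernel of exterior multiplication `Ω ⊗ E → ⋀²Ω` is `Sym²(E)`.**
If `E ≤ Ω` is a direct summand (it admits an `R`-linear retraction `π`), then
the kernel of the map `w : Ω ⊗[R] E → ⋀[R]²Ω`, `a ⊗ x ↦ a ∧ x`, is exactly the
submodule spanned by the elements `x ⊗ x` with `x ∈ E` (the symmetric square of
`E` inside `Ω ⊗ E`); in particular it is contained in `E ⊗ E`. -/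
theorem ker_wedge_eq_sym2 (R : Type*) [CommRing R]
    (Ω : Type*) [AddCommGroup Ω] [Module R Ω] (E : Submodule R Ω)
    (π : Ω →ₗ[R] E) (hπ : ∀ x : E, π (x : Ω) = x)
    (w : Ω ⊗[R] E →ₗ[R] (⋀[R]^2 Ω))
    (hw : ∀ (a : Ω) (x : E),
      (w (a ⊗ₜ[R] x) : ExteriorAlgebra R Ω) = ι R a * ι R (x : Ω)) :
    LinearMap.ker w =
      Submodule.span R {z : Ω ⊗[R] E | ∃ x : E, z = (x : Ω) ⊗ₜ[R] x} ∧
    LinearMap.ker w ≤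
      LinearMap.range (TensorProduct.map E.subtype (LinearMap.id : E →ₗ[R] E)) := by
  set S : Set (Ω ⊗[R] E) := {z : Ω ⊗[R] E | ∃ x : E, z = (x : Ω) ⊗ₜ[R] x} with hS
  set sp : Submodule R (Ω ⊗[R] E) := Submodule.span R S with hsp
  set p : Ω →ₗ[R] Ω := E.subtype ∘ₗ π with hp
  -- the bilinear map `a ↦ b ↦ [a ⊗ π b - (b - p b) ⊗ π a]` in the quotient
  set F : Ω →ₗ[R] Ω →ₗ[R] ((Ω ⊗[R] E) ⧸ sp) :=
    ((((TensorProduct.mk R Ω E).compl₂ π).compr₂ sp.mkQ) -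
      (((((TensorProduct.mk R Ω E).comp (LinearMap.id - p)).compl₂ π).flip).compr₂ sp.mkQ))
    with hF
  have hFapp : ∀ a b : Ω,
      F a b = sp.mkQ (a ⊗ₜ[R] π b - ((b - p b) ⊗ₜ[R] π a)) := by
    intro a b
    simp [hF, map_sub, TensorProduct.sub_tmul]
  have hdiag : ∀ a : Ω, F a a = 0 := by
    intro a
    rw [hFapp]
    have : (a ⊗ₜ[R] π a - ((a - p a) ⊗ₜ[R] π a)) = ((π a : Ω) ⊗ₜ[R] π a) := by
      rw [TensorProduct.sub_tmul]
      simp [hp]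
    rw [this]
    rw [Submodule.mkQ_apply, Submodule.Quotient.mk_eq_zero]
    exact Submodule.subset_span ⟨π a, rfl⟩
  set alt := bilinToAlt F hdiag with halt
  set f : ∀ i : ℕ, Ω [⋀^Fin i]→ₗ[R] ((Ω ⊗[R] E) ⧸ sp) :=
    fun i => match i with
      | 2 => alt
      | _ => 0
    with hf
  set G : ExteriorAlgebra R Ω →ₗ[R] ((Ω ⊗[R] E) ⧸ sp) := liftAlternating f with hG
  have key : ∀ z : Ω ⊗[R] E, G (w z : ExteriorAlgebra R Ω) = sp.mkQ z := by
    have : (G ∘ₗ (⋀[R]^2 Ω).subtype) ∘ₗ w = sp.mkQ := by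
      apply TensorProduct.ext'
      intro a x
      simp only [LinearMap.comp_apply, Submodule.subtype_apply]
      rw [hw a x, hG, liftAlternating_ι_mul, liftAlternating_ι,
        AlternatingMap.curryLeft_apply_apply]
      show alt _ = _
      have : alt ![a, (x : Ω)] = F a (x : Ω) := by
        simp [halt, bilinToAlt]
      rw [this, hFapp]
      have hx : π (x : Ω) = x := hπ x
      have hpx : p (x : Ω) = (x : Ω) := by simp [hp, hx]
      rw [hx, hpx]
      simp
    intro z
    have := congrArg (fun g => g z) this
    simpa using this
  -- reverse inclusion: generators are in the kernel
  have hker : LinearMap.ker w = sp := by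
    apply le_antisymm
    · intro z hz
      have h0 : sp.mkQ z = 0 := by
        rw [← key z]
        rw [LinearMap.mem_ker] at hz
        rw [hz]
        simp
      rwa [Submodule.mkQ_apply, Submodule.Quotient.mk_eq_zero] at h0
    · rw [hsp, Submodule.span_le]
      rintro z ⟨x, rfl⟩
      have : ((w ((x : Ω) ⊗ₜ[R] x) : ExteriorAlgebra R Ω)) = 0 := by
        rw [hw]
        exact ι_sq_zero (x : Ω)
      have : w ((x : Ω) ⊗ₜ[R] x) = 0 := Subtype.ext this
      exact this
  constructor
  · exact hker
  · rw [hker, hsp, Submodule.span_le]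
    rintro z ⟨x, rfl⟩
    exact ⟨x ⊗ₜ[R] x, by simp⟩
end
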